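/- arXiv:1806.04335 — 3 statements merged into one kernel-verified Lean document; each statement's English description precedes it below -/
import Mathlib

section
/- Recursive feasibility of the robust MPC: if the robust finite-horizon optimization problem is feasible at time t with parameter set Θ_t, and Θ_{t+1} ⊆ Θ_t, then the shifted policy sequence (appending the terminal feedback −Kx) is feasible at time t+1 for the realized next state, for any realized disturbance w_t ∈ 𝕎 and true parameter θ_a ∈ Θ_{t+1}. -/
/-- Predicted trajectory of the closed-loop prediction model
`x_{k+1} = A_cl x_k + B₁ v_k + E θ_k + w_k`. -/
def predTraj {n m p : ℕ}
    (Acl : Matrix (Fin n) (Fin n) ℝ) (B₁ : Matrix (Fin n) (Fin m) ℝ)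
    (E : Matrix (Fin n) (Fin p) ℝ)
    (x0 : Fin n → ℝ) (v : ℕ → Fin m → ℝ) (w : ℕ → Fin n → ℝ)
    (θ : ℕ → Fin p → ℝ) : ℕ → Fin n → ℝ
  | 0 => x0
  | k+1 => Acl.mulVec (predTraj Acl B₁ E x0 v w θ k) + B₁.mulVec (v k)
      + E.mulVec (θ k) + w k

/-- Feasibility of the robust MPC problem with horizon `N`, parameter set `Θ`,
terminal set `Xf`, at state `x0`, for the input sequence `v`. -/
def Feasible {n m p s : ℕ} (N : ℕ)
    (Acl : Matrix (Fin n) (Fin n) ℝ) (B₁ : Matrix (Fin n) (Fin m) ℝ)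
    (E : Matrix (Fin n) (Fin p) ℝ)
    (K : Matrix (Fin m) (Fin n) ℝ)
    (C : Matrix (Fin s) (Fin n) ℝ) (D : Matrix (Fin s) (Fin m) ℝ) (b : Fin s → ℝ)
    (W : Set (Fin n → ℝ)) (Θ : Set (Fin p → ℝ)) (Xf : Set (Fin n → ℝ))
    (x0 : Fin n → ℝ) (v : ℕ → Fin m → ℝ) : Prop :=
  ∀ (w : ℕ → Fin n → ℝ) (θ : ℕ → Fin p → ℝ),
    (∀ k, w k ∈ W) → (∀ k, θ k ∈ Θ) →
    (∀ k < N, C.mulVec (predTraj Acl B₁ E x0 v w θ k)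
        + D.mulVec (-K.mulVec (predTraj Acl B₁ E x0 v w θ k) + v k) ≤ b) ∧
    predTraj Acl B₁ E x0 v w θ N ∈ Xf

/-! The plan computed at time `t` has already been verified against every disturbance and
parameter sequence; prepending the realized pair `(w_t, θ_a)` to an arbitrary sequence for
time `t + 1` shows that its tail keeps the predicted states feasible and ends in `𝒳ᴺ_t`.
Robust positive invariance of `𝒳ᴺ_t` then makes the appended step `v = 0` admissible and keeps
the new terminal state in `𝒳ᴺ_t ⊆ 𝒳ᴺ_{t+1}`. -/

open Matrix

def seqCons {α : Type*} (a : α) (s : ℕ → α) : ℕ → α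
  | 0 => a
  | k + 1 => s k

def RobustPosInvariant {n p : ℕ} (Acl : Matrix (Fin n) (Fin n) ℝ) (E : Matrix (Fin n) (Fin p) ℝ)
    (W : Set (Fin n → ℝ)) (Θ : Set (Fin p → ℝ)) (X : Set (Fin n → ℝ)) : Prop :=
  ∀ x ∈ X, ∀ w ∈ W, ∀ θ ∈ Θ, Acl *ᵥ x + w + E *ᵥ θ ∈ X

section
variable {n m p s : ℕ} {Acl : Matrix (Fin n) (Fin n) ℝ} {B₁ : Matrix (Fin n) (Fin m) ℝ}
  {E : Matrix (Fin n) (Fin p) ℝ} {K : Matrix (Fin m) (Fin n) ℝ}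
  {C : Matrix (Fin s) (Fin n) ℝ} {D : Matrix (Fin s) (Fin m) ℝ} {b : Fin s → ℝ}
  {W : Set (Fin n → ℝ)} {Θ : Set (Fin p → ℝ)} {Xf : Set (Fin n → ℝ)}

theorem predTraj_seqCons_succ (x0 : Fin n → ℝ) (v : ℕ → Fin m → ℝ) (w0 : Fin n → ℝ)
    (w : ℕ → Fin n → ℝ) (θ0 : Fin p → ℝ) (θ : ℕ → Fin p → ℝ) (k : ℕ) :
    predTraj Acl B₁ E x0 v (seqCons w0 w) (seqCons θ0 θ) (k + 1) =
      predTraj Acl B₁ E (Acl *ᵥ x0 + B₁ *ᵥ v 0 + E *ᵥ θ0 + w0) (fun i => v (i + 1)) w θ k := by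
  induction k with
  | zero => rfl
  | succ k ih => rw [predTraj, ih]; rfl

theorem predTraj_congr_input {x0 : Fin n → ℝ} {v v' : ℕ → Fin m → ℝ} {w : ℕ → Fin n → ℝ}
    {θ : ℕ → Fin p → ℝ} {k : ℕ} (h : ∀ i < k, v i = v' i) :
    predTraj Acl B₁ E x0 v w θ k = predTraj Acl B₁ E x0 v' w θ k := by
  induction k with
  | zero => rfl
  | succ k ih =>
    simp only [predTraj]
    rw [ih fun i hi => h i (by omega), h k k.lt_succ_self]

theorem Feasible.tail {N : ℕ} {x0 : Fin n → ℝ} {v : ℕ → Fin m → ℝ}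
    (hfeas : Feasible (N + 1) Acl B₁ E K C D b W Θ Xf x0 v)
    {w0 : Fin n → ℝ} {θ0 : Fin p → ℝ} (hw0 : w0 ∈ W) (hθ0 : θ0 ∈ Θ) :
    Feasible N Acl B₁ E K C D b W Θ Xf (Acl *ᵥ x0 + B₁ *ᵥ v 0 + E *ᵥ θ0 + w0)
      (fun i => v (i + 1)) := by
  intro w θ hw hθ
  obtain ⟨hcon, hterm⟩ := hfeas (seqCons w0 w) (seqCons θ0 θ)
    (by rintro (_ | k); exacts [hw0, hw k]) (by rintro (_ | k); exacts [hθ0, hθ k])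
  rw [predTraj_seqCons_succ] at hterm
  refine ⟨fun k hk => ?_, hterm⟩
  have hconk := hcon (k + 1) (by omega)
  rwa [predTraj_seqCons_succ] at hconk

theorem Feasible.mono {N : ℕ} {Θ' : Set (Fin p → ℝ)} {Xf' : Set (Fin n → ℝ)}
    {x0 : Fin n → ℝ} {v : ℕ → Fin m → ℝ} (hfeas : Feasible N Acl B₁ E K C D b W Θ Xf x0 v)
    (hΘ : Θ' ⊆ Θ) (hX : Xf ⊆ Xf') : Feasible N Acl B₁ E K C D b W Θ' Xf' x0 v := fun w θ hw hθ =>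
  (hfeas w θ hw fun k => hΘ (hθ k)).imp id fun h => hX h

theorem Feasible.append_terminal {N : ℕ} {x0 : Fin n → ℝ} {v : ℕ → Fin m → ℝ}
    (hfeas : Feasible N Acl B₁ E K C D b W Θ Xf x0 v)
    (hinv : RobustPosInvariant Acl E W Θ Xf) (hcon : ∀ x ∈ Xf, (C - D * K) *ᵥ x ≤ b) :
    Feasible (N + 1) Acl B₁ E K C D b W Θ Xf x0 (fun k => if k < N then v k else 0) := by
  intro w θ hw hθ
  obtain ⟨hconN, htermN⟩ := hfeas w θ hw hθ
  dsimp only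
  have htraj : ∀ k ≤ N, predTraj Acl B₁ E x0 (fun k => if k < N then v k else 0) w θ k =
      predTraj Acl B₁ E x0 v w θ k := fun k hk =>
    predTraj_congr_input fun i hi => if_pos (by omega)
  refine ⟨fun k hk => ?_, ?_⟩
  · rcases Nat.lt_succ_iff_lt_or_eq.mp hk with hk | rfl
    · rw [htraj k hk.le, if_pos hk]
      exact hconN k hk
    · -- the appended input `v = 0` applies the terminal feedback `-K x`
      rw [htraj k le_rfl, if_neg (lt_irrefl k), add_zero, mulVec_neg, mulVec_mulVec,
        ← sub_eq_add_neg, ← sub_mulVec]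
      exact hcon _ htermN
  · rw [predTraj, htraj N le_rfl, if_neg (lt_irrefl N), mulVec_zero, add_zero,
      add_right_comm]
    exact hinv _ htermN _ (hw N) _ (hθ N)

end

/-- Recursive feasibility: the shifted input sequence (appending the terminal
feedback, i.e. `v = 0`) is feasible at time `t+1` for the realized next state. -/
theorem mpc_recursive_feasibility {n m p s : ℕ} (N : ℕ) (hN : 1 ≤ N)
    (Acl : Matrix (Fin n) (Fin n) ℝ) (B₁ : Matrix (Fin n) (Fin m) ℝ)
    (E : Matrix (Fin n) (Fin p) ℝ) (K : Matrix (Fin m) (Fin n) ℝ)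
    (C : Matrix (Fin s) (Fin n) ℝ) (D : Matrix (Fin s) (Fin m) ℝ) (b : Fin s → ℝ)
    (W : Set (Fin n → ℝ)) (Θt Θt1 : Set (Fin p → ℝ))
    (Xt Xt1 : Set (Fin n → ℝ))
    (hΘ : Θt1 ⊆ Θt) (hX : Xt ⊆ Xt1)
    -- Xt is robust positively invariant w.r.t. Θt:
    (hinv : ∀ x ∈ Xt, ∀ w ∈ W, ∀ θ ∈ Θt, Acl.mulVec x + w + E.mulVec θ ∈ Xt)
    (hcon : ∀ x ∈ Xt, (C - D * K).mulVec x ≤ b)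
    (xt : Fin n → ℝ) (v : ℕ → Fin m → ℝ)
    (hfeas : Feasible N Acl B₁ E K C D b W Θt Xt xt v)
    -- realized disturbance and true parameter:
    (wt : Fin n → ℝ) (θa : Fin p → ℝ) (hwt : wt ∈ W) (hθa : θa ∈ Θt1)
    (xt1 : Fin n → ℝ)
    (hxt1 : xt1 = Acl.mulVec xt + B₁.mulVec (v 0) + E.mulVec θa + wt) :
    Feasible N Acl B₁ E K C D b W Θt1 Xt1 xt1
      (fun k => if k < N - 1 then v (k+1) else 0) := by
  obtain ⟨M, rfl⟩ := Nat.exists_eq_add_of_le' hN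
  subst hxt1
  exact ((hfeas.tail hwt (hΘ hθa)).append_terminal hinv hcon).mono hΘ hX
end

section
/- LP duality for robust constraints: the semi-infinite constraint F v + G s ≤ c + H x for all s ∈ 𝕊 = {s : S s ≤ h} holds if and only if there exists a nonnegative matrix Z with Zᵀ S = G (row-wise) and F v + Zᵀ h ≤ c + H x, provided 𝕊 is nonempty and bounded. -/
/-!
Row by row, the robust constraint says that a linear inequality `g ⬝ᵥ s ≤ r` holds on the
nonempty polyhedron `{s | S *ᵥ s ≤ h}`; the affine Farkas lemma turns this into a certificate
`z ≥ 0` with `z ᵥ* S = g` and `z ⬝ᵥ h ≤ r`, and the certificates of the rows form `Z`.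

The affine lemma is the homogeneous Farkas lemma applied to the homogenised system
`[S h; 0 1]`: a dual vector `(s, μ)` with `μ > 0` rescales to the feasible point `-s / μ`,
while one with `μ = 0` is a recession direction of the polyhedron, along which `g` cannot
decrease since the polyhedron is nonempty. Farkas' lemma itself is proved by induction on the
number of generators, eliminating one generator by projecting the others along it
(Fourier–Motzkin).
-/

namespace Matrix

lemma optionElim_vecMul {R m η : Type*} [Semiring R] [Fintype m] (A : Matrix (Option m) η R)
    (t : R) (z : m → R) : (fun i => i.elim t z) ᵥ* A = t • A none + z ᵥ* A.submatrix some id := by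
  simp only [vecMul_eq_sum, Fintype.sum_option, Option.elim_none, Option.elim_some]
  rfl

variable {𝕜 : Type*} [Field 𝕜] [LinearOrder 𝕜] [IsStrictOrderedRing 𝕜]

section Farkas

variable {m η : Type*} [Fintype η]

/-- Projecting the rows of `T` and the vector `b` along `u` onto the hyperplane `y⊥`
preserves the dual condition; this eliminates the generator `u`. -/
lemma nonneg_dotProduct_projection {T : Matrix m η 𝕜} {u b y : η → 𝕜}
    (huy : u ⬝ᵥ y ≠ 0) (hb : ∀ y', 0 ≤ u ⬝ᵥ y' → 0 ≤ T *ᵥ y' → 0 ≤ b ⬝ᵥ y') (y' : η → 𝕜)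
    (hy' : 0 ≤ (T - (u ⬝ᵥ y)⁻¹ • vecMulVec (T *ᵥ y) u) *ᵥ y') :
    0 ≤ (b - ((u ⬝ᵥ y)⁻¹ * (b ⬝ᵥ y)) • u) ⬝ᵥ y' := by
  set y'' := y' - ((u ⬝ᵥ y)⁻¹ * (u ⬝ᵥ y')) • y
  have hu : u ⬝ᵥ y'' = 0 := by
    simp only [y'', dotProduct_sub, dotProduct_smul, smul_eq_mul]
    field_simp
    ring
  have hT : (T - (u ⬝ᵥ y)⁻¹ • vecMulVec (T *ᵥ y) u) *ᵥ y' = T *ᵥ y'' := by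
    ext i
    simp only [y'', sub_mulVec, smul_mulVec, vecMulVec_mulVec, mulVec_sub, mulVec_smul,
      Pi.sub_apply, Pi.smul_apply, MulOpposite.smul_eq_mul_unop, MulOpposite.unop_op,
      smul_eq_mul]
    ring
  have hb'' : (b - ((u ⬝ᵥ y)⁻¹ * (b ⬝ᵥ y)) • u) ⬝ᵥ y' = b ⬝ᵥ y'' := by
    simp only [y'', sub_dotProduct, dotProduct_sub, smul_dotProduct, dotProduct_smul, smul_eq_mul]
    ring
  rw [hb'']
  exact hb y'' hu.ge (hT ▸ hy')

lemma exists_nonneg_vecMul_eq_of_nonneg_mulVec_option [Fintype m]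
    (ih : ∀ (T : Matrix m η 𝕜) (b : η → 𝕜), (∀ y, 0 ≤ T *ᵥ y → 0 ≤ b ⬝ᵥ y) →
      ∃ z, 0 ≤ z ∧ z ᵥ* T = b)
    (A : Matrix (Option m) η 𝕜) (b : η → 𝕜) (hb : ∀ y, 0 ≤ A *ᵥ y → 0 ≤ b ⬝ᵥ y) :
    ∃ z, 0 ≤ z ∧ z ᵥ* A = b := by
  set u := A none
  set T := A.submatrix some id
  have hb' : ∀ y, 0 ≤ u ⬝ᵥ y → 0 ≤ T *ᵥ y → 0 ≤ b ⬝ᵥ y := fun y hu hT =>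
    hb y (Option.forall.2 ⟨hu, hT⟩)
  by_cases hT : ∃ z, 0 ≤ z ∧ z ᵥ* T = b
  · obtain ⟨z, hz, rfl⟩ := hT
    exact ⟨fun i => i.elim 0 z, Option.forall.2 ⟨le_rfl, hz⟩, by simp [optionElim_vecMul, T]⟩
  obtain ⟨y, hTy, hby⟩ : ∃ y, 0 ≤ T *ᵥ y ∧ b ⬝ᵥ y < 0 := by
    by_contra! h
    exact hT (ih T b h)
  have huy : u ⬝ᵥ y < 0 := by
    by_contra! h
    exact hby.not_ge (hb' y h hTy)
  obtain ⟨z, hz, hzT⟩ := ih _ _ (nonneg_dotProduct_projection huy.ne hb')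
  set w := z ᵥ* T
  have hwy : 0 ≤ w ⬝ᵥ y := by
    rw [← dotProduct_mulVec]
    exact dotProduct_nonneg_of_nonneg hz hTy
  have hb_eq : b = ((u ⬝ᵥ y)⁻¹ * (b ⬝ᵥ y - w ⬝ᵥ y)) • u + w := by
    rw [vecMul_sub, vecMul_smul, vecMul_vecMulVec, dotProduct_mulVec] at hzT
    linear_combination (norm := module) -hzT
  refine ⟨fun i => i.elim ((u ⬝ᵥ y)⁻¹ * (b ⬝ᵥ y - w ⬝ᵥ y)) z,
    Option.forall.2 ⟨?_, hz⟩, ?_⟩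
  · exact mul_nonneg_of_nonpos_of_nonpos (inv_neg''.2 huy).le (by linarith)
  · rw [optionElim_vecMul]
    exact hb_eq.symm

theorem exists_nonneg_vecMul_eq_of_nonneg_mulVec [Fintype m]
    (A : Matrix m η 𝕜) (b : η → 𝕜) (hb : ∀ y, 0 ≤ A *ᵥ y → 0 ≤ b ⬝ᵥ y) :
    ∃ z, 0 ≤ z ∧ z ᵥ* A = b := by
  revert A b hb
  refine Fintype.induction_empty_option (P := fun m [Fintype m] => ∀ (A : Matrix m η 𝕜)
    (b : η → 𝕜), (∀ y, 0 ≤ A *ᵥ y → 0 ≤ b ⬝ᵥ y) → ∃ z, 0 ≤ z ∧ z ᵥ* A = b) ?_ ?_ ?_ m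
  · intro α β _ e ih A b hb
    let := Fintype.ofEquiv β e.symm
    obtain ⟨z, hz, hzA⟩ := ih (A.submatrix e id) b fun y hy => hb y fun i =>
      e.apply_symm_apply i ▸ hy (e.symm i)
    exact ⟨z ∘ e.symm, fun i => hz _, by rwa [submatrix_vecMul_equiv] at hzA⟩
  · intro A b hb
    have hbb : b ⬝ᵥ b ≤ 0 := by simpa using hb (-b) fun i => i.elim
    have hb0 : b = 0 :=
      dotProduct_self_eq_zero.1 (hbb.antisymm (Finset.sum_nonneg fun i _ => mul_self_nonneg (b i)))
    exact ⟨0, le_rfl, by simp [hb0]⟩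
  · intro α _ ih
    exact exists_nonneg_vecMul_eq_of_nonneg_mulVec_option ih

end Farkas

section AffineFarkas

variable {m ι : Type*} [Fintype ι] {S : Matrix m ι 𝕜} {h : m → 𝕜} {g : ι → 𝕜} {r : 𝕜}

lemma nonneg_dotProduct_of_nonneg_mulVec (hne : ∃ s₀, S *ᵥ s₀ ≤ h)
    (hg : ∀ s, S *ᵥ s ≤ h → g ⬝ᵥ s ≤ r) {s : ι → 𝕜} (hs : 0 ≤ S *ᵥ s) : 0 ≤ g ⬝ᵥ s := by
  obtain ⟨s₀, hs₀⟩ := hne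
  by_contra! hgs
  set t := (g ⬝ᵥ s₀ - r - 1) / g ⬝ᵥ s
  have ht : 0 ≤ t := div_nonneg_of_nonpos (by linarith [hg s₀ hs₀]) hgs.le
  have hfeas : S *ᵥ (s₀ - t • s) ≤ h := by
    rw [mulVec_sub, mulVec_smul]
    intro k
    simp only [Pi.sub_apply, Pi.smul_apply, smul_eq_mul]
    linarith [hs₀ k, mul_nonneg ht (hs k)]
  have := hg _ hfeas
  rw [dotProduct_sub, dotProduct_smul, smul_eq_mul, div_mul_cancel₀ _ hgs.ne] at this
  linarith

lemma nonneg_dotProduct_add_mul_of_nonneg_mulVec_add_smul (hne : ∃ s₀, S *ᵥ s₀ ≤ h)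
    (hg : ∀ s, S *ᵥ s ≤ h → g ⬝ᵥ s ≤ r) {s : ι → 𝕜} {μ : 𝕜} (hμ : 0 ≤ μ)
    (hs : 0 ≤ S *ᵥ s + μ • h) : 0 ≤ g ⬝ᵥ s + μ * r := by
  rcases hμ.eq_or_lt with rfl | hμ
  · simpa using nonneg_dotProduct_of_nonneg_mulVec hne hg (by simpa using hs)
  have hfeas : S *ᵥ (-μ⁻¹ • s) ≤ h := fun k => by
    have hsk := hs k
    simp only [mulVec_smul, Pi.smul_apply, smul_eq_mul, Pi.add_apply, Pi.zero_apply] at hsk ⊢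
    have hk : -μ⁻¹ * (S *ᵥ s) k = h k - μ⁻¹ * ((S *ᵥ s) k + μ * h k) := by field_simp; ring
    rw [hk]
    linarith [mul_nonneg (inv_nonneg.2 hμ.le) hsk]
  have hgs := hg _ hfeas
  rw [dotProduct_smul, smul_eq_mul] at hgs
  have hr : g ⬝ᵥ s + μ * r = μ * (r - -μ⁻¹ * g ⬝ᵥ s) := by field_simp; ring
  rw [hr]
  exact mul_nonneg hμ.le (sub_nonneg.2 hgs)

variable [Fintype m]

theorem exists_nonneg_vecMul_eq_dotProduct_le (hne : ∃ s₀, S *ᵥ s₀ ≤ h)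
    (hg : ∀ s, S *ᵥ s ≤ h → g ⬝ᵥ s ≤ r) : ∃ z, 0 ≤ z ∧ z ᵥ* S = g ∧ z ⬝ᵥ h ≤ r := by
  obtain ⟨z, hz, hzA⟩ := exists_nonneg_vecMul_eq_of_nonneg_mulVec
    (fromBlocks S (replicateCol Unit h) 0 (1 : Matrix Unit Unit 𝕜)) (Sum.elim g fun _ => r)
    fun y hy => by
      have hμ : 0 ≤ y (Sum.inr ()) := by simpa [fromBlocks_mulVec] using hy (Sum.inr ())
      have hs : 0 ≤ S *ᵥ (y ∘ Sum.inl) + y (Sum.inr ()) • h := fun k => by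
        simpa [fromBlocks_mulVec, mulVec, dotProduct, mul_comm] using hy (Sum.inl k)
      simpa [dotProduct, mul_comm] using
        nonneg_dotProduct_add_mul_of_nonneg_mulVec_add_smul hne hg hμ hs
  have hzS : z ∘ Sum.inl ᵥ* S = g := funext fun l => by
    simpa [vecMul_fromBlocks] using congrFun hzA (Sum.inl l)
  have hzh : (z ∘ Sum.inl) ⬝ᵥ h + z (Sum.inr ()) = r := by
    simpa [vecMul_fromBlocks, vecMul, dotProduct] using congrFun hzA (Sum.inr ())
  have hz₀ : 0 ≤ z (Sum.inr ()) := hz _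
  exact ⟨z ∘ Sum.inl, fun k => hz _, hzS, by linarith⟩

theorem forall_mulVec_le_iff_exists_nonneg {q : Type*} (S : Matrix m ι 𝕜) (h : m → 𝕜)
    (G : Matrix q ι 𝕜) (r : q → 𝕜) (hne : ∃ s₀, S *ᵥ s₀ ≤ h) :
    (∀ s, S *ᵥ s ≤ h → G *ᵥ s ≤ r) ↔
      ∃ W : Matrix q m 𝕜, (∀ i k, 0 ≤ W i k) ∧ W * S = G ∧ W *ᵥ h ≤ r := by
  constructor
  · intro hG
    choose z hz using fun i => exists_nonneg_vecMul_eq_dotProduct_le hne fun s hs => hG s hs i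
    exact ⟨of z, fun i => (hz i).1, funext fun i => (hz i).2.1, fun i => (hz i).2.2⟩
  · rintro ⟨W, hW, rfl, hWh⟩ s hs i
    rw [← mulVec_mulVec]
    exact (dotProduct_le_dotProduct_of_nonneg_left hs (hW i)).trans (hWh i)

end AffineFarkas

end Matrix

open Matrix

theorem robust_constraint_duality_general {mN n d q a : ℕ}
    (F : Matrix (Fin q) (Fin mN) ℝ) (G : Matrix (Fin q) (Fin d) ℝ)
    (H : Matrix (Fin q) (Fin n) ℝ) (c : Fin q → ℝ)
    (S : Matrix (Fin a) (Fin d) ℝ) (h : Fin a → ℝ)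
    (v : Fin mN → ℝ) (x : Fin n → ℝ)
    (hne : ∃ s, S.mulVec s ≤ h) :
    (∀ s, S.mulVec s ≤ h → F.mulVec v + G.mulVec s ≤ c + H.mulVec x) ↔
    (∃ Z : Matrix (Fin a) (Fin q) ℝ, (∀ i j, 0 ≤ Z i j) ∧
      Zᵀ * S = G ∧ F.mulVec v + Zᵀ.mulVec h ≤ c + H.mulVec x) := by
  simp only [← le_sub_iff_add_le']
  rw [forall_mulVec_le_iff_exists_nonneg S h G _ hne]
  exact ⟨fun ⟨W, hW, hWS, hWh⟩ => ⟨Wᵀ, fun i j => hW j i, hWS, hWh⟩,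
    fun ⟨Z, hZ, hZS, hZh⟩ => ⟨Zᵀ, fun i j => hZ j i, hZS, hZh⟩⟩

/-- LP duality reformulation of the semi-infinite robust constraint
`F v + G s ≤ c + H x` for all `s` in a nonempty bounded polyhedron `𝕊 = {s : S s ≤ h}`. -/
theorem robust_constraint_duality {mN n d q a : ℕ}
    (F : Matrix (Fin q) (Fin mN) ℝ) (G : Matrix (Fin q) (Fin d) ℝ)
    (H : Matrix (Fin q) (Fin n) ℝ) (c : Fin q → ℝ)
    (S : Matrix (Fin a) (Fin d) ℝ) (h : Fin a → ℝ)
    (v : Fin mN → ℝ) (x : Fin n → ℝ)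
    (hne : ∃ s, S.mulVec s ≤ h)
    (hbdd : Bornology.IsBounded {s | S.mulVec s ≤ h}) :
    (∀ s, S.mulVec s ≤ h → F.mulVec v + G.mulVec s ≤ c + H.mulVec x) ↔
    (∃ Z : Matrix (Fin a) (Fin q) ℝ, (∀ i j, 0 ≤ Z i j) ∧
      Zᵀ * S = G ∧ F.mulVec v + Zᵀ.mulVec h ≤ c + H.mulVec x) :=
  robust_constraint_duality_general F G H c S h v x hne
end

section
/- If the parameter sets are nested (Θ_{t+1} ⊆ Θ_t for all t) then the sequence of maximal robust positive invariant sets is nondecreasing and its union is robust positively invariant with respect to ∩_t Θ_t. -/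
open Matrix

/-- Robust positive invariance w.r.t. a parameter set `Θ`. -/
def RPI {n m p s : ℕ}
    (Acl : Matrix (Fin n) (Fin n) ℝ) (E : Matrix (Fin n) (Fin p) ℝ)
    (W : Set (Fin n → ℝ)) (Θ : Set (Fin p → ℝ))
    (C : Matrix (Fin s) (Fin n) ℝ) (D : Matrix (Fin s) (Fin m) ℝ)
    (K : Matrix (Fin m) (Fin n) ℝ) (b : Fin s → ℝ)
    (X : Set (Fin n → ℝ)) : Prop :=
  X ⊆ {x | (C - D * K).mulVec x ≤ b} ∧
  ∀ x ∈ X, ∀ w ∈ W, ∀ θ ∈ Θ, Acl.mulVec x + w + E.mulVec θ ∈ X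

namespace RPI

variable {n m p s : ℕ} {Acl : Matrix (Fin n) (Fin n) ℝ} {E : Matrix (Fin n) (Fin p) ℝ}
  {W : Set (Fin n → ℝ)} {Θ Θ' : Set (Fin p → ℝ)}
  {C : Matrix (Fin s) (Fin n) ℝ} {D : Matrix (Fin s) (Fin m) ℝ}
  {K : Matrix (Fin m) (Fin n) ℝ} {b : Fin s → ℝ}

theorem mono_param {X : Set (Fin n → ℝ)} (hX : RPI Acl E W Θ C D K b X) (hΘ : Θ' ⊆ Θ) :
    RPI Acl E W Θ' C D K b X :=
  ⟨hX.1, fun x hx w hw θ hθ => hX.2 x hx w hw θ (hΘ hθ)⟩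

theorem iUnion {ι : Sort*} {X : ι → Set (Fin n → ℝ)} (hX : ∀ i, RPI Acl E W Θ C D K b (X i)) :
    RPI Acl E W Θ C D K b (⋃ i, X i) := by
  refine ⟨Set.iUnion_subset fun i => (hX i).1, fun x hx w hw θ hθ => ?_⟩
  obtain ⟨i, hxi⟩ := Set.mem_iUnion.mp hx
  exact Set.mem_iUnion_of_mem i ((hX i).2 x hxi w hw θ hθ)

end RPI

/-- With nested parameter sets, the maximal robust positive invariant sets are
nondecreasing and their union is robust positively invariant w.r.t. `⋂ t, Θ t`. -/
theorem maximal_rpi_nondecreasing {n m p s : ℕ}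
    (Acl : Matrix (Fin n) (Fin n) ℝ) (E : Matrix (Fin n) (Fin p) ℝ)
    (W : Set (Fin n → ℝ))
    (C : Matrix (Fin s) (Fin n) ℝ) (D : Matrix (Fin s) (Fin m) ℝ)
    (K : Matrix (Fin m) (Fin n) ℝ) (b : Fin s → ℝ)
    (Θ : ℕ → Set (Fin p → ℝ)) (hΘnest : ∀ t, Θ (t+1) ⊆ Θ t)
    (𝒳 : ℕ → Set (Fin n → ℝ))
    (hRPI : ∀ t, RPI Acl E W (Θ t) C D K b (𝒳 t))
    (hmax : ∀ t, ∀ X : Set (Fin n → ℝ), RPI Acl E W (Θ t) C D K b X → X ⊆ 𝒳 t) :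
    (∀ t, 𝒳 t ⊆ 𝒳 (t+1)) ∧
    RPI Acl E W (⋂ t, Θ t) C D K b (⋃ t, 𝒳 t) :=
  ⟨fun t => hmax (t + 1) (𝒳 t) ((hRPI t).mono_param (hΘnest t)),
    RPI.iUnion fun t => (hRPI t).mono_param (Set.iInter_subset Θ t)⟩
end
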